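/- arXiv:2506.24112 — 4 statements merged into one kernel-verified Lean document; each statement's English description precedes it below -/
import Mathlib

section
/- The reshuffling map can increase trace distance by at most a factor d: for bipartite density matrices ρ₁, ρ₂ on ℂ^d ⊗ ℂ^d, ‖R(ρ₁) − R(ρ₂)‖₁ ≤ d·‖ρ₁ − ρ₂‖₁. -/
open scoped Matrix ComplexOrder Kronecker

/-- Singular values of a square complex matrix: square roots of the eigenvalues of `Aᴴ * A`. -/
noncomputable def singularValues {n : Type*} [Fintype n] [DecidableEq n]
    (A : Matrix n n ℂ) : n → ℝ :=
  fun i => Real.sqrt ((Matrix.posSemidef_conjTranspose_mul_self A).1.eigenvalues i)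

/-- Schatten 1-norm (trace norm): the sum of the singular values. -/
noncomputable def traceNorm {n : Type*} [Fintype n] [DecidableEq n]
    (A : Matrix n n ℂ) : ℝ :=
  ∑ i, singularValues A i

/-- Operator (spectral) norm: the largest singular value. -/
noncomputable def opNorm {n : Type*} [Fintype n] [DecidableEq n]
    (A : Matrix n n ℂ) : ℝ :=
  ⨆ i, singularValues A i

/-- Frobenius (Schatten 2-) norm. -/
noncomputable def frobNorm {n : Type*} [Fintype n] [DecidableEq n]
    (A : Matrix n n ℂ) : ℝ :=
  Real.sqrt (∑ i, ∑ j, ‖A i j‖ ^ 2)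

/-- The Liouville representation (A-form) `Σ_m K_m ⊗ K_m*` of the channel with
Kraus operators `K_m`. -/
noncomputable def liouville {d m : ℕ} (K : Fin m → Matrix (Fin d) (Fin d) ℂ) :
    Matrix (Fin d × Fin d) (Fin d × Fin d) ℂ :=
  ∑ l, (K l) ⊗ₖ ((K l).map (starRingEnd ℂ))

/-- The reshuffling operation, sending `|i⟩⟨j| ⊗ |k⟩⟨l|` to `|i⟩⟨k| ⊗ |j⟩⟨l|`. -/
def reshuffle {n : Type*} (M : Matrix (n × n) (n × n) ℂ) : Matrix (n × n) (n × n) ℂ :=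
  fun p q => M (p.1, q.1) (p.2, q.2)

/-!
Reshuffling only permutes the entries of a matrix, so it preserves the Frobenius norm. For an
`N × N` matrix, Cauchy–Schwarz on the singular values gives `‖X‖₁ ≤ √N ‖X‖₂`, while `‖X‖₂ ≤ ‖X‖₁`
always. With `N = d²` this yields `‖R(X)‖₁ ≤ d ‖R(X)‖₂ = d ‖X‖₂ ≤ d ‖X‖₁` for every `X`.
-/

theorem trace_conjTranspose_mul_self_eq_sum_norm_sq {m n 𝕜 : Type*} [Fintype m] [Fintype n]
    [RCLike 𝕜] (A : Matrix m n 𝕜) : (Aᴴ * A).trace = ∑ i, ∑ j, (‖A i j‖ ^ 2 : 𝕜) := by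
  simp only [Matrix.trace, Matrix.diag, Matrix.mul_apply, Matrix.conjTranspose_apply,
    RCLike.star_def, RCLike.conj_mul]
  exact Finset.sum_comm

section SchattenNorms

variable {n : Type*} [Fintype n] [DecidableEq n]

theorem sum_sq_singularValues (A : Matrix n n ℂ) :
    ∑ i, singularValues A i ^ 2 = ∑ i, ∑ j, ‖A i j‖ ^ 2 := by
  have hA := Matrix.posSemidef_conjTranspose_mul_self A
  have htrace := hA.1.trace_eq_sum_eigenvalues
  rw [trace_conjTranspose_mul_self_eq_sum_norm_sq] at htrace
  simp only [singularValues, Real.sq_sqrt (hA.eigenvalues_nonneg _)]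
  exact_mod_cast htrace.symm

theorem frobNorm_eq_sqrt_sum_sq_singularValues (A : Matrix n n ℂ) :
    frobNorm A = √(∑ i, singularValues A i ^ 2) := by
  rw [frobNorm, sum_sq_singularValues]

theorem singularValues_nonneg (A : Matrix n n ℂ) (i : n) : 0 ≤ singularValues A i :=
  Real.sqrt_nonneg _

theorem frobNorm_le_traceNorm (A : Matrix n n ℂ) : frobNorm A ≤ traceNorm A := by
  rw [frobNorm_eq_sqrt_sum_sq_singularValues, Real.sqrt_le_left]
  · exact Finset.sum_sq_le_sq_sum_of_nonneg fun i _ => singularValues_nonneg A i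
  · exact Finset.sum_nonneg fun i _ => singularValues_nonneg A i

theorem traceNorm_le_sqrt_card_mul_frobNorm (A : Matrix n n ℂ) :
    traceNorm A ≤ √(Fintype.card n) * frobNorm A := by
  rw [traceNorm, frobNorm_eq_sqrt_sum_sq_singularValues, ← Real.sqrt_mul (Nat.cast_nonneg _),
    Real.le_sqrt (Finset.sum_nonneg fun i _ => singularValues_nonneg A i) (by positivity)]
  exact sq_sum_le_card_mul_sum_sq

end SchattenNorms

theorem reshuffle_sub {n : Type*} (M N : Matrix (n × n) (n × n) ℂ) :
    reshuffle (M - N) = reshuffle M - reshuffle N :=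
  rfl

section Reshuffle

variable {n : Type*} [Fintype n] [DecidableEq n]

theorem frobNorm_reshuffle (M : Matrix (n × n) (n × n) ℂ) :
    frobNorm (reshuffle M) = frobNorm M := by
  simp only [frobNorm, reshuffle, Fintype.sum_prod_type]
  exact congrArg _ (Finset.sum_congr rfl fun _ _ => Finset.sum_comm)

theorem traceNorm_reshuffle_le (M : Matrix (n × n) (n × n) ℂ) :
    traceNorm (reshuffle M) ≤ Fintype.card n * traceNorm M := by
  have hcard : √(Fintype.card (n × n) : ℝ) = Fintype.card n := by
    rw [Fintype.card_prod, Nat.cast_mul, Real.sqrt_mul_self (Nat.cast_nonneg _)]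
  calc traceNorm (reshuffle M)
      ≤ √(Fintype.card (n × n)) * frobNorm (reshuffle M) :=
        traceNorm_le_sqrt_card_mul_frobNorm _
    _ = Fintype.card n * frobNorm M := by rw [frobNorm_reshuffle, hcard]
    _ ≤ Fintype.card n * traceNorm M := by gcongr; exact frobNorm_le_traceNorm M

end Reshuffle

theorem traceNorm_reshuffle_sub_le_general {d : ℕ}
    (ρ₁ ρ₂ : Matrix (Fin d × Fin d) (Fin d × Fin d) ℂ) :
    traceNorm (reshuffle ρ₁ - reshuffle ρ₂) ≤ d * traceNorm (ρ₁ - ρ₂) := by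
  simpa only [reshuffle_sub, Fintype.card_fin] using traceNorm_reshuffle_le (ρ₁ - ρ₂)

/-- Reshuffling can increase the trace distance of bipartite density matrices by at most
a factor of `d`. -/
theorem traceNorm_reshuffle_sub_le {d : ℕ} (hd : 1 ≤ d)
    (ρ₁ ρ₂ : Matrix (Fin d × Fin d) (Fin d × Fin d) ℂ)
    (hρ₁ : ρ₁.PosSemidef) (htr₁ : ρ₁.trace = 1)
    (hρ₂ : ρ₂.PosSemidef) (htr₂ : ρ₂.trace = 1) :
    traceNorm (reshuffle ρ₁ - reshuffle ρ₂) ≤ d * traceNorm (ρ₁ - ρ₂) :=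
  traceNorm_reshuffle_sub_le_general ρ₁ ρ₂
end

section
/- For any even function f on ℝ applied via functional calculus, f([[0, A],[A†, 0]]) = [[U f(Σ) U†, 0],[0, V f(Σ) V†]], where A = UΣV† is a singular value decomposition. -/
open scoped Matrix ComplexOrder Kronecker

/-- Functional calculus on a Hermitian matrix via the spectral theorem. -/
noncomputable def matFun {n : Type*} [Fintype n] [DecidableEq n]
    {A : Matrix n n ℂ} (hA : A.IsHermitian) (f : ℝ → ℝ) : Matrix n n ℂ :=
  (hA.eigenvectorUnitary : Matrix n n ℂ) *
    Matrix.diagonal (fun i => (f (hA.eigenvalues i) : ℂ)) *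
    star (hA.eigenvectorUnitary : Matrix n n ℂ)

/-! With `W = (1/√2) [[U, U], [V, -V]]`, which is unitary, the Hermitization of `A = UΣVᴴ` is
`W diag(Σ, -Σ) Wᴴ`. The matrix function does not depend on the unitary diagonalization used,
so `f` of the Hermitization is `W diag(f(Σ), f(-Σ)) Wᴴ`; for even `f` this is
`W diag(f(Σ), f(Σ)) Wᴴ = [[U f(Σ) Uᴴ, 0], [0, V f(Σ) Vᴴ]]`. -/

open Matrix Polynomial

namespace Matrix

lemma aeval_diagonal {R α ι : Type*} [CommSemiring R] [Semiring α] [Algebra R α] [Fintype ι]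
    [DecidableEq ι] (c : ι → α) (p : R[X]) :
    aeval (diagonal c) p = diagonal fun i => aeval (c i) p := by
  rw [← diagonalAlgHom_apply (R := R), aeval_algHom_apply, diagonalAlgHom_apply]
  congr 1
  ext i
  exact (aeval_algHom_apply (Pi.evalAlgHom R (fun _ => α) i) c p).symm

variable {ι : Type*} [Fintype ι] [DecidableEq ι]

lemma aeval_unitary_conj {W : Matrix ι ι ℂ} (hW : W ∈ unitaryGroup ι ℂ) (M : Matrix ι ι ℂ)
    (p : ℝ[X]) : aeval (W * M * star W) p = W * aeval M p * star W :=
  aeval_algHom_apply (Unitary.conjStarAlgAut ℝ _ ⟨W, hW⟩) M p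

lemma aeval_unitary_conj_diagonal_ofReal {W : Matrix ι ι ℂ} (hW : W ∈ unitaryGroup ι ℂ)
    {d : ι → ℝ} {p : ℝ[X]} {f : ℝ → ℝ} (hp : ∀ i, p.eval (d i) = f (d i)) :
    aeval (W * diagonal (fun i => (d i : ℂ)) * star W) p =
      W * diagonal (fun i => (f (d i) : ℂ)) * star W := by
  simp only [aeval_unitary_conj hW, aeval_diagonal, ← Complex.coe_algebraMap,
    aeval_algebraMap_apply_eq_algebraMap_eval, hp]

lemma matFun_eq_of_eq_unitary_conj_diagonal {A W : Matrix ι ι ℂ} (hA : A.IsHermitian)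
    (hW : W ∈ unitaryGroup ι ℂ) {d : ι → ℝ}
    (hAW : A = W * diagonal (fun i => (d i : ℂ)) * star W) (f : ℝ → ℝ) :
    matFun hA f = W * diagonal (fun i => (f (d i) : ℂ)) * star W := by
  -- Both sides are `aeval p A` for a polynomial `p` interpolating `f` on both lists of eigenvalues.
  set nodes := Finset.univ.image d ∪ Finset.univ.image hA.eigenvalues
  set p := Lagrange.interpolate nodes id f
  have hp : ∀ x ∈ nodes, p.eval x = f x := fun x hx =>
    Lagrange.eval_interpolate_at_node f (Set.injOn_id _) hx
  have hE : A = (hA.eigenvectorUnitary : Matrix ι ι ℂ) *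
      diagonal (fun i => (hA.eigenvalues i : ℂ)) * star (hA.eigenvectorUnitary : Matrix ι ι ℂ) :=
    hA.spectral_theorem
  calc matFun hA f = aeval A p := by
        conv_rhs => rw [hE]
        exact (aeval_unitary_conj_diagonal_ofReal hA.eigenvectorUnitary.2
          fun i => hp _ (by simp [nodes])).symm
    _ = _ := by
        rw [hAW]
        exact aeval_unitary_conj_diagonal_ofReal hW fun i => hp _ (by simp [nodes])

noncomputable def hermitizationUnitary (U V : Matrix ι ι ℂ) : Matrix (ι ⊕ ι) (ι ⊕ ι) ℂ :=
  (Real.sqrt 2)⁻¹ • fromBlocks U U V (-V)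

lemma hermitizationUnitary_mul_fromBlocks_mul_star (U V X Y : Matrix ι ι ℂ) :
    hermitizationUnitary U V * fromBlocks X 0 0 Y * star (hermitizationUnitary U V) =
      (2⁻¹ : ℝ) • fromBlocks (U * (X + Y) * Uᴴ) (U * (X - Y) * Vᴴ)
        (V * (X - Y) * Uᴴ) (V * (X + Y) * Vᴴ) := by
  have h2 : (Real.sqrt 2)⁻¹ * (Real.sqrt 2)⁻¹ = (2⁻¹ : ℝ) := by
    rw [← mul_inv, Real.mul_self_sqrt zero_le_two]
  simp only [hermitizationUnitary, star_smul, star_trivial, smul_mul_assoc, mul_smul_comm,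
    smul_smul, h2, star_eq_conjTranspose, fromBlocks_conjTranspose, conjTranspose_neg,
    fromBlocks_multiply]
  congr 2 <;> noncomm_ring

lemma hermitizationUnitary_mul_fromBlocks_self_mul_star (U V X : Matrix ι ι ℂ) :
    hermitizationUnitary U V * fromBlocks X 0 0 X * star (hermitizationUnitary U V) =
      fromBlocks (U * X * Uᴴ) 0 0 (V * X * Vᴴ) := by
  rw [hermitizationUnitary_mul_fromBlocks_mul_star, ← two_smul ℝ X]
  simp [fromBlocks_smul]

lemma hermitizationUnitary_mul_fromBlocks_neg_mul_star (U V X : Matrix ι ι ℂ) :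
    hermitizationUnitary U V * fromBlocks X 0 0 (-X) * star (hermitizationUnitary U V) =
      fromBlocks 0 (U * X * Vᴴ) (V * X * Uᴴ) 0 := by
  rw [hermitizationUnitary_mul_fromBlocks_mul_star, sub_neg_eq_add, ← two_smul ℝ X]
  simp [fromBlocks_smul]

lemma hermitizationUnitary_mem_unitaryGroup {U V : Matrix ι ι ℂ} (hU : U ∈ unitaryGroup ι ℂ)
    (hV : V ∈ unitaryGroup ι ℂ) : hermitizationUnitary U V ∈ unitaryGroup (ι ⊕ ι) ℂ := by
  have h := hermitizationUnitary_mul_fromBlocks_self_mul_star U V 1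
  rwa [fromBlocks_one, mul_one, mul_one, mul_one, ← star_eq_conjTranspose,
    ← star_eq_conjTranspose, mem_unitaryGroup_iff.mp hU, mem_unitaryGroup_iff.mp hV,
    fromBlocks_one, ← mem_unitaryGroup_iff] at h

end Matrix

theorem matFun_even_hermitization_general {n : ℕ}
    (A U V : Matrix (Fin n) (Fin n) ℂ)
    (hU : U ∈ Matrix.unitaryGroup (Fin n) ℂ) (hV : V ∈ Matrix.unitaryGroup (Fin n) ℂ)
    (s : Fin n → ℝ)
    (hA : A = U * Matrix.diagonal (fun i => (s i : ℂ)) * Vᴴ)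
    (hH : (Matrix.fromBlocks 0 A Aᴴ 0).IsHermitian)
    (f : ℝ → ℝ) (hf : ∀ x, f (-x) = f x) :
    matFun hH f =
      Matrix.fromBlocks
        (U * Matrix.diagonal (fun i => (f (s i) : ℂ)) * Uᴴ) 0 0
        (V * Matrix.diagonal (fun i => (f (s i) : ℂ)) * Vᴴ) := by
  have hAH : Aᴴ = V * diagonal (fun i => (s i : ℂ)) * Uᴴ := by
    simp [hA, diagonal_conjTranspose, Pi.star_def, mul_assoc]
  have hHW : fromBlocks 0 A Aᴴ 0 = hermitizationUnitary U V *
      diagonal (fun j => ((Sum.elim s (-s) j : ℝ) : ℂ)) * star (hermitizationUnitary U V) := by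
    rw [hAH, hA, ← hermitizationUnitary_mul_fromBlocks_neg_mul_star, diagonal_neg,
      fromBlocks_diagonal]
    congr 3
    ext (i | i) <;> simp
  rw [matFun_eq_of_eq_unitary_conj_diagonal hH (hermitizationUnitary_mem_unitaryGroup hU hV) hHW,
    ← hermitizationUnitary_mul_fromBlocks_self_mul_star, fromBlocks_diagonal]
  congr 3
  ext (i | i) <;> simp [hf]

/-- For an even function `f`, applying `f` to the Hermitization `[[0, A], [Aᴴ, 0]]` of
`A = UΣVᴴ` gives the block-diagonal matrix `[[U f(Σ) Uᴴ, 0], [0, V f(Σ) Vᴴ]]`. -/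
theorem matFun_even_hermitization {n : ℕ}
    (A U V : Matrix (Fin n) (Fin n) ℂ)
    (hU : U ∈ Matrix.unitaryGroup (Fin n) ℂ) (hV : V ∈ Matrix.unitaryGroup (Fin n) ℂ)
    (s : Fin n → ℝ) (hs : ∀ i, 0 ≤ s i)
    (hA : A = U * Matrix.diagonal (fun i => (s i : ℂ)) * Vᴴ)
    (hH : (Matrix.fromBlocks 0 A Aᴴ 0).IsHermitian)
    (f : ℝ → ℝ) (hf : ∀ x, f (-x) = f x) :
    matFun hH f =
      Matrix.fromBlocks
        (U * Matrix.diagonal (fun i => (f (s i) : ℂ)) * Uᴴ) 0 0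
        (V * Matrix.diagonal (fun i => (f (s i) : ℂ)) * Vᴴ) :=
  matFun_even_hermitization_general A U V hU hV s hA hH f hf
end

section
/- For any two quantum states (positive semidefinite trace-one matrices) ρ, σ, the Fuchs–van de Graaf inequalities hold: 1 − √F(ρ,σ) ≤ (1/2)‖ρ − σ‖₁ ≤ √(1 − F(ρ,σ)), where F(ρ,σ) = ‖√ρ √σ‖₁². -/
open scoped Matrix ComplexOrder Kronecker

/-- The positive semidefinite square root (as in the older Mathlib's `Matrix.PosSemidef.sqrt`). -/
noncomputable def Matrix.PosSemidef.sqrt {n : Type*} [Fintype n] {𝕜 : Type*} [RCLike 𝕜]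
    [DecidableEq n] {A : Matrix n n 𝕜} (hA : A.PosSemidef) : Matrix n n 𝕜 :=
  hA.1.eigenvectorUnitary.1 * Matrix.diagonal ((↑) ∘ (√·) ∘ hA.1.eigenvalues) *
    (star hA.1.eigenvectorUnitary : Matrix n n 𝕜)

/-!
Write `A = √ρ`, `B = √σ`; then `‖A‖₂ = ‖B‖₂ = 1` and `√F = ‖AB‖₁`. By the singular value
decomposition, `‖M‖₁` is the maximum of `Re tr (M U)` over unitaries `U`, which gives Hölder's
inequality `‖X Yᴴ‖₁ ≤ ‖X‖₂ ‖Y‖₂`.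

Lower bound (Powers–Størmer): in an eigenbasis of `A - B`, pairing `A² - B²` with the unitary
`sign (A - B)` gives `‖A - B‖₂² ≤ ‖A² - B²‖₁`, because each diagonal entry `|a - b|` of `|A - B|`
is at most the entry `a + b` of `A + B`; and `‖A - B‖₂² = 2 - 2 Re tr (A B) ≥ 2 - 2 ‖AB‖₁`.

Upper bound: take a unitary `V` with `tr (A B V) = ‖AB‖₁` and `C = B V`, so that `C Cᴴ = σ`. Then
`2 (ρ - σ) = (A - C)(A + C)ᴴ + (A + C)(A - C)ᴴ`, and Hölder bounds `‖ρ - σ‖₁` by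
`‖A - C‖₂ ‖A + C‖₂ = √((2 - 2‖AB‖₁)(2 + 2‖AB‖₁))`.
-/

namespace Matrix

variable {n : Type*} [Fintype n]

lemma re_trace_conjTranspose_mul_comm (X Y : Matrix n n ℂ) :
    (Yᴴ * X).trace.re = (Xᴴ * Y).trace.re := by
  rw [← conjTranspose_conjTranspose X, ← conjTranspose_mul, trace_conjTranspose,
    conjTranspose_conjTranspose, Complex.star_def, Complex.conj_re]

lemma mul_self_sub_mul_self_apply_self_of_isDiag {R : Type*} [CommRing R]
    {P Q : Matrix n n R} (hPQ : (P - Q).IsDiag) (i : n) :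
    (P * P - Q * Q) i i = (P i i - Q i i) * (P i i + Q i i) := by
  have hoff : ∀ j, j ≠ i → P i j = Q i j ∧ P j i = Q j i := fun j hji =>
    ⟨sub_eq_zero.mp (hPQ hji.symm), sub_eq_zero.mp (hPQ hji)⟩
  rw [sub_apply, mul_apply, mul_apply, ← Finset.sum_sub_distrib,
    Fintype.sum_eq_single i fun j hji => by rw [(hoff j hji).1, (hoff j hji).2, sub_self]]
  ring

variable [DecidableEq n]

section sqrt

variable {𝕜 : Type*} [RCLike 𝕜]

lemma PosSemidef.posSemidef_sqrt {A : Matrix n n 𝕜} (hA : A.PosSemidef) : hA.sqrt.PosSemidef :=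
  (PosSemidef.diagonal fun _ => RCLike.ofReal_nonneg.mpr (Real.sqrt_nonneg _))
    |>.mul_mul_conjTranspose_same _

lemma PosSemidef.sqrt_mul_self {A : Matrix n n 𝕜} (hA : A.PosSemidef) : hA.sqrt * hA.sqrt = A := by
  have hsqrt : hA.sqrt = Unitary.conjStarAlgAut 𝕜 _ hA.1.eigenvectorUnitary
      (diagonal ((↑) ∘ (√·) ∘ hA.1.eigenvalues)) := rfl
  conv_rhs => rw [hA.1.spectral_theorem]
  rw [hsqrt, ← map_mul, diagonal_mul_diagonal]
  congr 2
  funext i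
  simp [← RCLike.ofReal_mul, Real.mul_self_sqrt (hA.eigenvalues_nonneg i)]

end sqrt

section unitary

variable {α : Type*} [CommRing α] [StarRing α]

lemma conjTranspose_mul_self_of_mem_unitaryGroup {U : Matrix n n α} (hU : U ∈ unitaryGroup n α) :
    Uᴴ * U = 1 :=
  mem_unitaryGroup_iff'.mp hU

lemma mul_conjTranspose_self_of_mem_unitaryGroup {U : Matrix n n α} (hU : U ∈ unitaryGroup n α) :
    U * Uᴴ = 1 :=
  mem_unitaryGroup_iff.mp hU

lemma conjTranspose_mem_unitaryGroup {U : Matrix n n α} (hU : U ∈ unitaryGroup n α) :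
    Uᴴ ∈ unitaryGroup n α :=
  Unitary.star_mem hU

end unitary

lemma diagonal_ofReal_mem_unitaryGroup {ε : n → ℝ} (hε : ∀ i, ε i = 1 ∨ ε i = -1) :
    diagonal (fun i => (ε i : ℂ)) ∈ unitaryGroup n ℂ := by
  rw [mem_unitaryGroup_iff, star_eq_conjTranspose, diagonal_conjTranspose, diagonal_mul_diagonal,
    ← diagonal_one]
  congr 1
  funext i
  rcases hε i with h | h <;> simp [h]

lemma frobNorm_nonneg (X : Matrix n n ℂ) : 0 ≤ frobNorm X := Real.sqrt_nonneg _

lemma frobNorm_sq (X : Matrix n n ℂ) : frobNorm X ^ 2 = (Xᴴ * X).trace.re := by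
  rw [frobNorm, Real.sq_sqrt (by positivity), trace, Complex.re_sum, Finset.sum_comm]
  refine Finset.sum_congr rfl fun i _ => ?_
  simp [mul_apply, Complex.re_sum, ← Complex.normSq_eq_norm_sq, Complex.normSq_apply]

lemma frobNorm_sq' (X : Matrix n n ℂ) : frobNorm X ^ 2 = (X * Xᴴ).trace.re := by
  rw [frobNorm_sq, trace_mul_comm]

lemma frobNorm_unitary_mul {U : Matrix n n ℂ} (hU : U ∈ unitaryGroup n ℂ) (X : Matrix n n ℂ) :
    frobNorm (U * X) = frobNorm X := by
  rw [← sq_eq_sq₀ (frobNorm_nonneg _) (frobNorm_nonneg _), frobNorm_sq, frobNorm_sq,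
    conjTranspose_mul, Matrix.mul_assoc, ← Matrix.mul_assoc Uᴴ,
    conjTranspose_mul_self_of_mem_unitaryGroup hU, Matrix.one_mul]

lemma frobNorm_mul_unitary {U : Matrix n n ℂ} (hU : U ∈ unitaryGroup n ℂ) (X : Matrix n n ℂ) :
    frobNorm (X * U) = frobNorm X := by
  rw [← sq_eq_sq₀ (frobNorm_nonneg _) (frobNorm_nonneg _), frobNorm_sq', frobNorm_sq',
    conjTranspose_mul, Matrix.mul_assoc, ← Matrix.mul_assoc U,
    mul_conjTranspose_self_of_mem_unitaryGroup hU, Matrix.one_mul]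

lemma frobNorm_sq_add (X Y : Matrix n n ℂ) :
    frobNorm (X + Y) ^ 2 = frobNorm X ^ 2 + frobNorm Y ^ 2 + 2 * (Xᴴ * Y).trace.re := by
  simp only [frobNorm_sq, conjTranspose_add, Matrix.add_mul, Matrix.mul_add, trace_add,
    Complex.add_re, re_trace_conjTranspose_mul_comm X Y]
  ring

lemma frobNorm_sq_sub (X Y : Matrix n n ℂ) :
    frobNorm (X - Y) ^ 2 = frobNorm X ^ 2 + frobNorm Y ^ 2 - 2 * (Xᴴ * Y).trace.re := by
  simp only [frobNorm_sq, conjTranspose_sub, Matrix.sub_mul, Matrix.mul_sub, trace_sub,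
    Complex.sub_re, re_trace_conjTranspose_mul_comm X Y]
  ring

lemma frobNorm_sq_diagonal_ofReal (d : n → ℝ) :
    frobNorm (diagonal fun i => (d i : ℂ)) ^ 2 = ∑ i, d i ^ 2 := by
  rw [frobNorm_sq, diagonal_conjTranspose, diagonal_mul_diagonal, trace_diagonal, Complex.re_sum]
  refine Finset.sum_congr rfl fun i _ => ?_
  simp [sq]

lemma norm_trace_mul_conjTranspose_le (X Y : Matrix n n ℂ) :
    ‖(X * Yᴴ).trace‖ ≤ frobNorm X * frobNorm Y := by
  let vec : Matrix n n ℂ → EuclideanSpace ℂ (n × n) := fun Z => WithLp.toLp 2 fun p => Z p.1 p.2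
  have hnorm : ∀ Z, ‖vec Z‖ = frobNorm Z := fun Z => by
    simp [vec, EuclideanSpace.norm_eq, frobNorm, Fintype.sum_prod_type]
  have htr : (X * Yᴴ).trace = inner ℂ (vec Y) (vec X) := by
    simp [vec, trace, mul_apply, PiLp.inner_apply, Fintype.sum_prod_type]
  rw [htr, ← hnorm, ← hnorm, mul_comm]
  exact norm_inner_le_norm _ _

lemma exists_unitary_mul_diagonal_eq (Y : Matrix n n ℂ) (hY : (Yᴴ * Y).IsDiag) :
    ∃ U ∈ unitaryGroup n ℂ, U * diagonal (fun i => (√((Yᴴ * Y) i i).re : ℂ)) = Y := by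
  let y : n → EuclideanSpace ℂ n := fun i => WithLp.toLp 2 fun j => Y j i
  have hinner : ∀ i k, inner ℂ (y i) (y k) = (Yᴴ * Y) i k := fun i k => by
    simp [y, PiLp.inner_apply, mul_apply, mul_comm]
  have hnorm : ∀ i, √((Yᴴ * Y) i i).re = ‖y i‖ := fun i => by
    rw [← hinner, norm_eq_sqrt_re_inner (𝕜 := ℂ)]; rfl
  have horth : Orthonormal ℂ ({i | y i ≠ 0}.domRestrict fun i => (‖y i‖⁻¹ : ℂ) • y i) := by
    rw [orthonormal_iff_ite]
    rintro ⟨i, hi⟩ ⟨k, hk⟩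
    simp only [Set.domRestrict_apply, inner_smul_left, inner_smul_right, Subtype.mk.injEq]
    by_cases hik : i = k
    · subst hik
      have hi' : (‖y i‖ : ℂ) ≠ 0 := by simpa using hi
      simp only [inner_self_eq_norm_sq_to_K, if_true, map_inv₀, Complex.conj_ofReal]
      field_simp
      rfl
    · simp [hinner, hY hik, hik]
  obtain ⟨b, hb⟩ := horth.exists_orthonormalBasis_extension_of_card_eq finrank_euclideanSpace
  let U := (EuclideanSpace.basisFun n ℂ).toBasis.toMatrix b.toBasis
  have hU : ∀ j i, U j i = b i j := fun _ _ => rfl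
  refine ⟨U, (EuclideanSpace.basisFun n ℂ).toMatrix_orthonormalBasis_mem_unitary b, ?_⟩
  ext j i
  rw [mul_diagonal, hnorm, hU]
  by_cases hi : y i = 0
  · have hY0 : Y j i = 0 := congrFun (congrArg WithLp.ofLp hi) j
    rw [hi, norm_zero, Complex.ofReal_zero, mul_zero, hY0]
  · have hi' : (‖y i‖ : ℂ) ≠ 0 := Complex.ofReal_ne_zero.mpr (norm_ne_zero_iff.mpr hi)
    rw [hb i hi, PiLp.smul_apply, smul_eq_mul]
    field_simp
    rfl

theorem exists_svd (M : Matrix n n ℂ) :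
    ∃ U ∈ unitaryGroup n ℂ, ∃ V ∈ unitaryGroup n ℂ,
      M = U * diagonal (fun i => (singularValues M i : ℂ)) * Vᴴ := by
  let hMM := (posSemidef_conjTranspose_mul_self M).1
  let V : Matrix n n ℂ := hMM.eigenvectorUnitary
  have hV : V ∈ unitaryGroup n ℂ := hMM.eigenvectorUnitary.2
  have hdiag : (M * V)ᴴ * (M * V) = diagonal (RCLike.ofReal ∘ hMM.eigenvalues) := by
    rw [← hMM.conjStarAlgAut_star_eigenvectorUnitary, Unitary.conjStarAlgAut_star_apply,
      conjTranspose_mul, star_eq_conjTranspose]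
    simp only [V, Matrix.mul_assoc]
  obtain ⟨U, hU, hUMV⟩ := exists_unitary_mul_diagonal_eq (M * V) (hdiag ▸ isDiag_diagonal _)
  refine ⟨U, hU, V, hV, ?_⟩
  have hs : (fun i => (√(((M * V)ᴴ * (M * V)) i i).re : ℂ)) =
      fun i => (singularValues M i : ℂ) := by
    simp only [hdiag, diagonal_apply_eq, Function.comp_apply]
    rfl
  rw [← hs, hUMV, Matrix.mul_assoc, mul_conjTranspose_self_of_mem_unitaryGroup hV, Matrix.mul_one]

lemma singularValues_nonneg (M : Matrix n n ℂ) (i : n) : 0 ≤ singularValues M i :=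
  Real.sqrt_nonneg _

lemma traceNorm_nonneg (M : Matrix n n ℂ) : 0 ≤ traceNorm M :=
  Finset.sum_nonneg fun i _ => singularValues_nonneg M i

lemma re_trace_diagonal_mul_le {s : n → ℝ} (hs : ∀ i, 0 ≤ s i) {W : Matrix n n ℂ}
    (hW : W ∈ unitaryGroup n ℂ) : (diagonal (fun i => (s i : ℂ)) * W).trace.re ≤ ∑ i, s i := by
  simp only [trace, diag_apply, diagonal_mul, Complex.re_sum, Complex.re_ofReal_mul]
  refine Finset.sum_le_sum fun i _ => mul_le_of_le_one_right (hs i) ?_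
  exact (Complex.re_le_norm _).trans (entry_norm_bound_of_unitary hW i i)

lemma re_trace_mul_le_traceNorm (M : Matrix n n ℂ) {X : Matrix n n ℂ}
    (hX : X ∈ unitaryGroup n ℂ) : (M * X).trace.re ≤ traceNorm M := by
  obtain ⟨U, hU, V, hV, hM⟩ := exists_svd M
  have hcycle : (M * X).trace =
      (diagonal (fun i => (singularValues M i : ℂ)) * (Vᴴ * X * U)).trace := by
    nth_rw 1 [hM]
    rw [Matrix.mul_assoc U, Matrix.mul_assoc U, trace_mul_comm U]
    simp only [Matrix.mul_assoc]
  rw [hcycle]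
  refine re_trace_diagonal_mul_le (singularValues_nonneg M) ?_
  exact mul_mem (mul_mem (conjTranspose_mem_unitaryGroup hV) hX) hU

lemma exists_unitary_trace_mul_eq_traceNorm (M : Matrix n n ℂ) :
    ∃ X ∈ unitaryGroup n ℂ, (M * X).trace = traceNorm M := by
  obtain ⟨U, hU, V, hV, hM⟩ := exists_svd M
  refine ⟨V * Uᴴ, mul_mem hV (conjTranspose_mem_unitaryGroup hU), ?_⟩
  nth_rw 1 [hM]
  rw [Matrix.mul_assoc, ← Matrix.mul_assoc Vᴴ, conjTranspose_mul_self_of_mem_unitaryGroup hV,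
    Matrix.one_mul, trace_mul_cycle, conjTranspose_mul_self_of_mem_unitaryGroup hU, Matrix.one_mul,
    trace_diagonal, traceNorm, Complex.ofReal_sum]

lemma re_trace_le_traceNorm (M : Matrix n n ℂ) : M.trace.re ≤ traceNorm M := by
  simpa using re_trace_mul_le_traceNorm M (one_mem _)

lemma traceNorm_unitary_mul_mul_le {U V : Matrix n n ℂ} (hU : U ∈ unitaryGroup n ℂ)
    (hV : V ∈ unitaryGroup n ℂ) (M : Matrix n n ℂ) : traceNorm (U * M * V) ≤ traceNorm M := by
  obtain ⟨X, hX, hUMV⟩ := exists_unitary_trace_mul_eq_traceNorm (U * M * V)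
  have hcycle : (U * M * V * X).trace = (M * (V * X * U)).trace := by
    rw [Matrix.mul_assoc U, Matrix.mul_assoc U, trace_mul_comm U]
    simp only [Matrix.mul_assoc]
  have := re_trace_mul_le_traceNorm M (mul_mem (mul_mem hV hX) hU)
  rwa [← hcycle, hUMV, Complex.ofReal_re] at this

lemma traceNorm_mul_conjTranspose_le (X Y : Matrix n n ℂ) :
    traceNorm (X * Yᴴ) ≤ frobNorm X * frobNorm Y := by
  obtain ⟨U, hU, hXYU⟩ := exists_unitary_trace_mul_eq_traceNorm (X * Yᴴ)
  have hUY : X * Yᴴ * U = X * (Uᴴ * Y)ᴴ := by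
    rw [conjTranspose_mul, conjTranspose_conjTranspose, Matrix.mul_assoc]
  calc traceNorm (X * Yᴴ) = ‖(X * (Uᴴ * Y)ᴴ).trace‖ := by
        rw [← hUY, hXYU, Complex.norm_real, Real.norm_of_nonneg (traceNorm_nonneg _)]
    _ ≤ frobNorm X * frobNorm (Uᴴ * Y) := norm_trace_mul_conjTranspose_le _ _
    _ = frobNorm X * frobNorm Y := by rw [frobNorm_unitary_mul (conjTranspose_mem_unitaryGroup hU)]

lemma sq_frobNorm_sub_le_traceNorm_of_isDiag {P Q : Matrix n n ℂ} (hP : P.PosSemidef)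
    (hQ : Q.PosSemidef) (hPQ : (P - Q).IsDiag) :
    frobNorm (P - Q) ^ 2 ≤ traceNorm (P * P - Q * Q) := by
  let p : n → ℝ := fun i => (P i i).re
  let q : n → ℝ := fun i => (Q i i).re
  have hp : ∀ i, P i i = p i := fun i => (hP.1.coe_re_apply_self i).symm
  have hq : ∀ i, Q i i = q i := fun i => (hQ.1.coe_re_apply_self i).symm
  have hp0 : ∀ i, 0 ≤ p i := fun i => (Complex.le_def.mp hP.diag_nonneg).1
  have hq0 : ∀ i, 0 ≤ q i := fun i => (Complex.le_def.mp hQ.diag_nonneg).1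
  have hPQ_eq : P - Q = diagonal fun i => ((p i - q i : ℝ) : ℂ) := by
    ext i j
    by_cases hij : i = j
    · subst hij; simp [hp, hq]
    · rw [hPQ hij, diagonal_apply_ne _ hij]
  let ε : n → ℝ := fun i => if q i ≤ p i then 1 else -1
  have hε1 : ∀ i, ε i = 1 ∨ ε i = -1 := fun i => by
    by_cases h : q i ≤ p i <;> simp [ε, h]
  have hε : ∀ i, (p i - q i) * ε i = |p i - q i| := fun i => by
    by_cases h : q i ≤ p i
    · simp [ε, h, abs_of_nonneg (sub_nonneg.mpr h)]
    · simp [ε, h, abs_of_neg (sub_neg.mpr (not_le.mp h))]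
  have htrace : ((P * P - Q * Q) * diagonal fun i => (ε i : ℂ)).trace.re =
      ∑ i, |p i - q i| * (p i + q i) := by
    simp only [trace, diag_apply, mul_diagonal, Complex.re_sum,
      mul_self_sub_mul_self_apply_self_of_isDiag hPQ, hp, hq, ← hε]
    refine Finset.sum_congr rfl fun i _ => ?_
    norm_cast
    ring
  calc frobNorm (P - Q) ^ 2 = ∑ i, (p i - q i) ^ 2 := by rw [hPQ_eq, frobNorm_sq_diagonal_ofReal]
    _ ≤ ∑ i, |p i - q i| * (p i + q i) := Finset.sum_le_sum fun i _ => by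
        rw [sq, ← abs_mul_abs_self]
        exact mul_le_mul_of_nonneg_left
          (abs_sub_le_iff.mpr ⟨by linarith [hq0 i], by linarith [hp0 i]⟩) (abs_nonneg _)
    _ = ((P * P - Q * Q) * diagonal fun i => (ε i : ℂ)).trace.re := htrace.symm
    _ ≤ traceNorm (P * P - Q * Q) :=
      re_trace_mul_le_traceNorm _ (diagonal_ofReal_mem_unitaryGroup hε1)

theorem sq_frobNorm_sub_le_traceNorm_mul_self_sub {A B : Matrix n n ℂ} (hA : A.PosSemidef)
    (hB : B.PosSemidef) : frobNorm (A - B) ^ 2 ≤ traceNorm (A * A - B * B) := by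
  have hAB : (A - B).IsHermitian := hA.1.sub hB.1
  let W : Matrix n n ℂ := hAB.eigenvectorUnitary
  have hW : W ∈ unitaryGroup n ℂ := hAB.eigenvectorUnitary.2
  let φ := Unitary.conjStarAlgAut ℂ (Matrix n n ℂ) (star hAB.eigenvectorUnitary)
  have hφ : ∀ X, φ X = Wᴴ * X * W := fun X =>
    Unitary.conjStarAlgAut_star_apply _ X
  have hφA : (φ A).PosSemidef := by rw [hφ]; exact hA.conjTranspose_mul_mul_same _
  have hφB : (φ B).PosSemidef := by rw [hφ]; exact hB.conjTranspose_mul_mul_same _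
  have hdiag : (φ A - φ B).IsDiag := by
    rw [← map_sub, hAB.conjStarAlgAut_star_eigenvectorUnitary]
    exact isDiag_diagonal _
  calc frobNorm (A - B) ^ 2 = frobNorm (φ A - φ B) ^ 2 := by
        rw [← map_sub, hφ, frobNorm_mul_unitary hW, frobNorm_unitary_mul
          (conjTranspose_mem_unitaryGroup hW)]
    _ ≤ traceNorm (φ A * φ A - φ B * φ B) :=
        sq_frobNorm_sub_le_traceNorm_of_isDiag hφA hφB hdiag
    _ = traceNorm (Wᴴ * (A * A - B * B) * W) := by
        rw [← map_mul, ← map_mul, ← map_sub, hφ]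
    _ ≤ traceNorm (A * A - B * B) :=
        traceNorm_unitary_mul_mul_le (conjTranspose_mem_unitaryGroup hW) hW _

theorem two_sub_two_mul_traceNorm_mul_le {A B : Matrix n n ℂ} (hA : A.PosSemidef)
    (hB : B.PosSemidef) (hA1 : frobNorm A = 1) (hB1 : frobNorm B = 1) :
    2 - 2 * traceNorm (A * B) ≤ traceNorm (A * A - B * B) :=
  calc 2 - 2 * traceNorm (A * B) ≤ 2 - 2 * (Aᴴ * B).trace.re := by
        rw [hA.1.eq]; linarith [re_trace_le_traceNorm (A * B)]
    _ = frobNorm (A - B) ^ 2 := by rw [frobNorm_sq_sub, hA1, hB1]; ring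
    _ ≤ traceNorm (A * A - B * B) := sq_frobNorm_sub_le_traceNorm_mul_self_sub hA hB

lemma traceNorm_mul_self_sub_mul_conjTranspose_le {A : Matrix n n ℂ} (hA : A.IsHermitian)
    (C : Matrix n n ℂ) :
    traceNorm (A * A - C * Cᴴ) ≤ frobNorm (A - C) * frobNorm (A + C) := by
  obtain ⟨X, hX, hAC⟩ := exists_unitary_trace_mul_eq_traceNorm (A * A - C * Cᴴ)
  have hsplit : (A * A - C * Cᴴ) + (A * A - C * Cᴴ) = (A - C) * (A + C)ᴴ + (A + C) * (A - C)ᴴ := by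
    rw [conjTranspose_add, conjTranspose_sub, hA.eq]
    noncomm_ring
  have h : traceNorm (A * A - C * Cᴴ) + traceNorm (A * A - C * Cᴴ) =
      ((A - C) * (A + C)ᴴ * X).trace.re + ((A + C) * (A - C)ᴴ * X).trace.re := by
    rw [← Complex.add_re, ← trace_add, ← Matrix.add_mul, ← hsplit, Matrix.add_mul, trace_add, hAC,
      Complex.add_re, Complex.ofReal_re]
  have h₁ := (re_trace_mul_le_traceNorm ((A - C) * (A + C)ᴴ) hX).trans
    (traceNorm_mul_conjTranspose_le _ _)
  have h₂ := (re_trace_mul_le_traceNorm ((A + C) * (A - C)ᴴ) hX).trans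
    (traceNorm_mul_conjTranspose_le _ _)
  linarith [mul_comm (frobNorm (A - C)) (frobNorm (A + C))]

theorem traceNorm_mul_self_sub_le_two_mul_sqrt {A B : Matrix n n ℂ} (hA : A.IsHermitian)
    (hA1 : frobNorm A = 1) (hB1 : frobNorm B = 1) :
    traceNorm (A * A - B * Bᴴ) ≤ 2 * √(1 - traceNorm (A * B) ^ 2) := by
  obtain ⟨V, hV, hABV⟩ := exists_unitary_trace_mul_eq_traceNorm (A * B)
  set N := traceNorm (A * B)
  set C := B * V
  have hCC : C * Cᴴ = B * Bᴴ := by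
    rw [conjTranspose_mul, Matrix.mul_assoc, ← Matrix.mul_assoc V,
      mul_conjTranspose_self_of_mem_unitaryGroup hV, Matrix.one_mul]
  have hC1 : frobNorm C = 1 := by rw [frobNorm_mul_unitary hV, hB1]
  have hAC : (Aᴴ * C).trace.re = N := by rw [hA.eq, ← Matrix.mul_assoc, hABV, Complex.ofReal_re]
  have hsq : (frobNorm (A - C) * frobNorm (A + C)) ^ 2 = 2 ^ 2 * (1 - N ^ 2) := by
    rw [mul_pow, frobNorm_sq_sub, frobNorm_sq_add, hA1, hC1, hAC]
    ring
  calc traceNorm (A * A - B * Bᴴ) = traceNorm (A * A - C * Cᴴ) := by rw [hCC]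
    _ ≤ frobNorm (A - C) * frobNorm (A + C) := traceNorm_mul_self_sub_mul_conjTranspose_le hA C
    _ = 2 * √(1 - N ^ 2) := by
        rw [← Real.sqrt_sq (mul_nonneg (frobNorm_nonneg _) (frobNorm_nonneg _)), hsq,
          Real.sqrt_mul (sq_nonneg 2), Real.sqrt_sq zero_le_two]

lemma PosSemidef.frobNorm_sqrt_eq_one {A : Matrix n n ℂ} (hA : A.PosSemidef) (htr : A.trace = 1) :
    frobNorm hA.sqrt = 1 := by
  have hsq : frobNorm hA.sqrt ^ 2 = 1 := by
    rw [frobNorm_sq, hA.posSemidef_sqrt.1.eq, hA.sqrt_mul_self, htr, Complex.one_re]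
  exact (pow_eq_one_iff_of_nonneg (frobNorm_nonneg _) two_ne_zero).mp hsq

end Matrix

/-- Fuchs–van de Graaf inequalities:
`1 − √F(ρ,σ) ≤ (1/2)‖ρ − σ‖₁ ≤ √(1 − F(ρ,σ))` with fidelity `F(ρ,σ) = ‖√ρ √σ‖₁²`. -/
theorem fuchs_van_de_graaf {d : ℕ}
    (ρ σ : Matrix (Fin d) (Fin d) ℂ)
    (hρ : ρ.PosSemidef) (htrρ : ρ.trace = 1)
    (hσ : σ.PosSemidef) (htrσ : σ.trace = 1) :
    1 - Real.sqrt ((traceNorm (hρ.sqrt * hσ.sqrt)) ^ 2) ≤ (1 / 2) * traceNorm (ρ - σ) ∧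
      (1 / 2) * traceNorm (ρ - σ) ≤
        Real.sqrt (1 - (traceNorm (hρ.sqrt * hσ.sqrt)) ^ 2) := by
  have hA := hρ.posSemidef_sqrt
  have hB := hσ.posSemidef_sqrt
  have hA1 := hρ.frobNorm_sqrt_eq_one htrρ
  have hB1 := hσ.frobNorm_sqrt_eq_one htrσ
  have hleft := Matrix.two_sub_two_mul_traceNorm_mul_le hA hB hA1 hB1
  have hright := Matrix.traceNorm_mul_self_sub_le_two_mul_sqrt hA.1 hA1 hB1
  rw [hρ.sqrt_mul_self, hσ.sqrt_mul_self] at hleft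
  rw [hB.1.eq, hρ.sqrt_mul_self, hσ.sqrt_mul_self] at hright
  rw [Real.sqrt_sq (Matrix.traceNorm_nonneg _)]
  constructor <;> linarith
end

section
/- Second-order Trotter error for the swap trick: for density matrices ρ, σ and Hermitian H̃ with ‖H̃‖∞ ≤ C, Tr_ρ[e^{−iH̃Δt}(ρ ⊗ σ)e^{iH̃Δt}] = σ − iΔt·[Tr_ρ(H̃(ρ⊗I)) -type commutator term] + O(Δt²); specifically, in the case H̃ = F (the swap operator), Tr₁[e^{−iFΔt}(ρ⊗σ)e^{iFΔt}] = cos²(Δt)·σ + sin²(Δt)·ρ − i sin(Δt)cos(Δt)·[ρ, σ]. -/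
/-!
Since `F² = 1`, the exponential series splits into even and odd parts, giving
`e^{∓iFt} = cos t · 1 ∓ i sin t · F`. Conjugating `ρ ⊗ σ` by this and tracing out the first
factor produces four terms: `Tr₁(ρ ⊗ σ) = (Tr ρ) σ`, `Tr₁[F(ρ ⊗ σ)] = ρσ`,
`Tr₁[(ρ ⊗ σ)F] = σρ` and `Tr₁[F(ρ ⊗ σ)F] = (Tr σ) ρ`.
-/

open scoped Matrix ComplexOrder Kronecker

open scoped Nat

/-- Partial trace over the first tensor factor. -/
noncomputable def ptrace1 {d : ℕ} (M : Matrix (Fin d × Fin d) (Fin d × Fin d) ℂ) :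
    Matrix (Fin d) (Fin d) ℂ :=
  Matrix.of fun j l => ∑ i, M (i, j) (i, l)

/-- The swap operator `F = Σ_{i,j} |i⟩⟨j| ⊗ |j⟩⟨i|` on `ℂ^d ⊗ ℂ^d`. -/
def swapOp (d : ℕ) : Matrix (Fin d × Fin d) (Fin d × Fin d) ℂ :=
  fun p q => if p.1 = q.2 ∧ p.2 = q.1 then 1 else 0

theorem NormedSpace.exp_smul_of_mul_self_eq_one {𝔸 : Type*} [Ring 𝔸] [Algebra ℂ 𝔸]
    [TopologicalSpace 𝔸] [IsTopologicalRing 𝔸] [ContinuousSMul ℂ 𝔸] [T2Space 𝔸]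
    {a : 𝔸} (ha : a * a = 1) (z : ℂ) :
    NormedSpace.exp (z • a) = Complex.cosh z • 1 + Complex.sinh z • a := by
  have pow_even (n : ℕ) : (z • a) ^ (2 * n) = z ^ (2 * n) • 1 := by
    rw [smul_pow, pow_mul a, sq, ha, one_pow]
  have pow_odd (n : ℕ) : (z • a) ^ (2 * n + 1) = z ^ (2 * n + 1) • a := by
    rw [pow_succ, pow_even, smul_mul_smul, one_mul, ← pow_succ]
  have hasSum_exp := HasSum.even_add_odd (f := fun n ↦ ((n ! : ℂ)⁻¹) • (z • a) ^ n)
    (by simpa [pow_even, smul_smul, div_eq_inv_mul] using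
      (Complex.hasSum_cosh z).smul_const (1 : 𝔸))
    (by simpa [pow_odd, smul_smul, div_eq_inv_mul] using
      (Complex.hasSum_sinh z).smul_const a)
  rw [NormedSpace.exp_eq_tsum ℂ]
  exact hasSum_exp.tsum_eq

section Swap

variable {d : ℕ}

lemma swapOp_mul_swapOp : swapOp d * swapOp d = 1 := by
  ext ⟨i, j⟩ ⟨k, l⟩
  simp [swapOp, Matrix.mul_apply, Fintype.sum_prod_type, Matrix.one_apply, ite_and,
    Prod.ext_iff, eq_comm, and_comm]

lemma swapOp_mul_apply (M : Matrix (Fin d × Fin d) (Fin d × Fin d) ℂ) (i j k l : Fin d) :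
    (swapOp d * M) (i, j) (k, l) = M (j, i) (k, l) := by
  simp [swapOp, Matrix.mul_apply, Fintype.sum_prod_type, ite_and]

lemma mul_swapOp_apply (M : Matrix (Fin d × Fin d) (Fin d × Fin d) ℂ) (i j k l : Fin d) :
    (M * swapOp d) (i, j) (k, l) = M (i, j) (l, k) := by
  simp [swapOp, Matrix.mul_apply, Fintype.sum_prod_type, ite_and, eq_comm]

lemma exp_I_mul_smul_swapOp (t : ℂ) :
    NormedSpace.exp ((Complex.I * t) • swapOp d) =
      Complex.cos t • 1 + (Complex.I * Complex.sin t) • swapOp d := by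
  rw [NormedSpace.exp_smul_of_mul_self_eq_one swapOp_mul_swapOp, mul_comm Complex.I t,
    Complex.cosh_mul_I, Complex.sinh_mul_I, mul_comm (Complex.sin t)]

end Swap

section PartialTrace

variable {d : ℕ}

lemma ptrace1_add (M N : Matrix (Fin d × Fin d) (Fin d × Fin d) ℂ) :
    ptrace1 (M + N) = ptrace1 M + ptrace1 N := by
  ext j l; simp [ptrace1, Finset.sum_add_distrib]

lemma ptrace1_smul (a : ℂ) (M : Matrix (Fin d × Fin d) (Fin d × Fin d) ℂ) :
    ptrace1 (a • M) = a • ptrace1 M := by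
  ext j l; simp [ptrace1, Finset.mul_sum]

variable (ρ σ : Matrix (Fin d) (Fin d) ℂ)

lemma ptrace1_kronecker : ptrace1 (ρ ⊗ₖ σ) = ρ.trace • σ := by
  ext j l
  simp [ptrace1, Matrix.trace, Finset.sum_mul]

lemma ptrace1_swapOp_mul_kronecker : ptrace1 (swapOp d * (ρ ⊗ₖ σ)) = ρ * σ := by
  ext j l
  simp only [ptrace1, Matrix.of_apply, swapOp_mul_apply]
  simp [Matrix.mul_apply]

lemma ptrace1_kronecker_mul_swapOp : ptrace1 ((ρ ⊗ₖ σ) * swapOp d) = σ * ρ := by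
  ext j l
  simp only [ptrace1, Matrix.of_apply, mul_swapOp_apply]
  simp [Matrix.mul_apply, mul_comm]

lemma ptrace1_swapOp_mul_kronecker_mul_swapOp :
    ptrace1 (swapOp d * (ρ ⊗ₖ σ) * swapOp d) = σ.trace • ρ := by
  ext j l
  simp [ptrace1, mul_swapOp_apply, swapOp_mul_apply, Matrix.trace, Finset.mul_sum, mul_comm]

lemma ptrace1_conj_kronecker (a b a' b' : ℂ) :
    ptrace1 ((a • 1 + b • swapOp d) * (ρ ⊗ₖ σ) * (a' • 1 + b' • swapOp d)) =
      (a * a' * ρ.trace) • σ + (a * b') • (σ * ρ) + (b * a') • (ρ * σ) +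
        (b * b' * σ.trace) • ρ := by
  simp only [add_mul, mul_add, Matrix.smul_mul, Matrix.mul_smul, one_mul, mul_one, ptrace1_add,
    ptrace1_smul, ptrace1_kronecker, ptrace1_swapOp_mul_kronecker, ptrace1_kronecker_mul_swapOp,
    ptrace1_swapOp_mul_kronecker_mul_swapOp, smul_smul]
  module

end PartialTrace

theorem swap_trick_exact_general {d : ℕ}
    (ρ σ : Matrix (Fin d) (Fin d) ℂ)
    (htrρ : ρ.trace = 1)
    (htrσ : σ.trace = 1)
    (Δt : ℝ) :
    ptrace1 (NormedSpace.exp ((-(Complex.I * (Δt : ℂ))) • swapOp d) *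
        (ρ ⊗ₖ σ) *
        NormedSpace.exp ((Complex.I * (Δt : ℂ)) • swapOp d)) =
      ((Real.cos Δt : ℂ) ^ 2) • σ + ((Real.sin Δt : ℂ) ^ 2) • ρ -
        (Complex.I * (Real.sin Δt : ℂ) * (Real.cos Δt : ℂ)) • (ρ * σ - σ * ρ) := by
  rw [← mul_neg, exp_I_mul_smul_swapOp, exp_I_mul_smul_swapOp, ptrace1_conj_kronecker,
    htrρ, htrσ, Complex.cos_neg, Complex.sin_neg, Complex.ofReal_cos, Complex.ofReal_sin]
  linear_combination (norm := module) Complex.I_sq • (-(Complex.sin Δt ^ 2) • ρ)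

/-- The swap trick: for density matrices `ρ, σ`,
`Tr₁[e^{−iFΔt}(ρ⊗σ)e^{iFΔt}] = cos²(Δt)·σ + sin²(Δt)·ρ − i sin(Δt)cos(Δt)·[ρ, σ]`. -/
theorem swap_trick_exact {d : ℕ} (hd : 1 ≤ d)
    (ρ σ : Matrix (Fin d) (Fin d) ℂ)
    (hρ : ρ.PosSemidef) (htrρ : ρ.trace = 1)
    (hσ : σ.PosSemidef) (htrσ : σ.trace = 1)
    (Δt : ℝ) :
    ptrace1 (NormedSpace.exp ((-(Complex.I * (Δt : ℂ))) • swapOp d) *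
        (ρ ⊗ₖ σ) *
        NormedSpace.exp ((Complex.I * (Δt : ℂ)) • swapOp d)) =
      ((Real.cos Δt : ℂ) ^ 2) • σ + ((Real.sin Δt : ℂ) ^ 2) • ρ -
        (Complex.I * (Real.sin Δt : ℂ) * (Real.cos Δt : ℂ)) • (ρ * σ - σ * ρ) :=
  swap_trick_exact_general ρ σ htrρ htrσ Δt
end
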